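/- Let (G,σ,w) be a signed graph on n vertices that is both positive-connected and negative-connected, with consensus index ε₀. For every 0 < ε < ε₀, the second smallest eigenvalue λ₂^(ε) of L_ε = L₊ − εL₋ satisfies λ₂^(ε) ≤ 2·d⁺_max − ε·μ₋⁰/(D·n), where D is the diameter of the underlying graph G, d⁺_max = max_{i∈V} d_i⁺, and μ₋⁰ is the minimum of the weights w_ij over edges (i,j)∈E₋. -/

import Mathlib

open Matrix BigOperators

open scoped Classical

/-- Moore–Penrose pseudoinverse of a square real matrix (chosen via the
defining Penrose equations; it is unique when it exists). -/
noncomputable def pinv {n : ℕ} (A : Matrix (Fin n) (Fin n) ℝ) : Matrix (Fin n) (Fin n) ℝ :=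
  if h : ∃ B : Matrix (Fin n) (Fin n) ℝ,
      A * B * A = A ∧ B * A * B = B ∧ (A * B)ᵀ = A * B ∧ (B * A)ᵀ = B * A
  then h.choose else 0

/-- The eigenvalues of a symmetric real matrix, sorted in nondecreasing order. -/
noncomputable def sortedEigs {n : ℕ} (A : Matrix (Fin n) (Fin n) ℝ) : List ℝ :=
  if h : A.IsHermitian then (Finset.univ.val.map h.eigenvalues).sort (· ≤ ·) else []

/-- The second smallest eigenvalue (with multiplicity) of a symmetric real matrix. -/
noncomputable def secondSmallestEig {n : ℕ} (A : Matrix (Fin n) (Fin n) ℝ) : ℝ :=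
  (sortedEigs A).getD 1 0

/-- The largest eigenvalue of a symmetric real matrix. -/
noncomputable def largestEig {n : ℕ} (A : Matrix (Fin n) (Fin n) ℝ) : ℝ :=
  (sortedEigs A).getD (n - 1) 0

/-- A signed weighted graph on `n` vertices, given by the positive-part and
negative-part weight functions (an edge carries a positive weight and a sign;
`wplus i j > 0` iff `(i,j)` is a positive edge, `wminus i j > 0` iff it is a
negative edge). -/
structure SignedGraph (n : ℕ) where
  wplus : Fin n → Fin n → ℝ
  wminus : Fin n → Fin n → ℝ
  wplus_symm : ∀ i j, wplus i j = wplus j i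
  wminus_symm : ∀ i j, wminus i j = wminus j i
  wplus_nonneg : ∀ i j, 0 ≤ wplus i j
  wminus_nonneg : ∀ i j, 0 ≤ wminus i j
  wplus_diag : ∀ i, wplus i i = 0
  wminus_diag : ∀ i, wminus i i = 0
  disjoint : ∀ i j, wplus i j = 0 ∨ wminus i j = 0

namespace SignedGraph

variable {n : ℕ} (Γ : SignedGraph n)

/-- positive degree -/
noncomputable def dplus (i : Fin n) : ℝ := ∑ j, Γ.wplus i j

/-- negative degree -/
noncomputable def dminus (i : Fin n) : ℝ := ∑ j, Γ.wminus i j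

/-- Laplacian of the positive subgraph -/
noncomputable def Lplus : Matrix (Fin n) (Fin n) ℝ :=
  Matrix.of fun i j => if i = j then Γ.dplus i else -Γ.wplus i j

/-- Laplacian of the negative subgraph -/
noncomputable def Lminus : Matrix (Fin n) (Fin n) ℝ :=
  Matrix.of fun i j => if i = j then Γ.dminus i else -Γ.wminus i j

/-- the ε-repelling Laplacian `L₊ - ε L₋` -/
noncomputable def Leps (ε : ℝ) : Matrix (Fin n) (Fin n) ℝ := Γ.Lplus - ε • Γ.Lminus

/-- the positive subgraph as a simple graph -/
def posGraph : SimpleGraph (Fin n) := SimpleGraph.fromRel (fun i j => 0 < Γ.wplus i j)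

/-- the negative subgraph as a simple graph -/
def negGraph : SimpleGraph (Fin n) := SimpleGraph.fromRel (fun i j => 0 < Γ.wminus i j)

/-- the underlying simple graph -/
def underlying : SimpleGraph (Fin n) :=
  SimpleGraph.fromRel (fun i j => 0 < Γ.wplus i j + Γ.wminus i j)

/-- the signed graph is positive-connected -/
def PosConnected : Prop := Γ.posGraph.Connected

/-- the signed graph is negative-connected -/
def NegConnected : Prop := Γ.negGraph.Connected

/-- the consensus index ε₀ -/
noncomputable def consensusIndex : ℝ :=
  sSup {ε : ℝ | 0 < ε ∧ (Γ.Leps ε).PosSemidef ∧ (Γ.Leps ε).rank = n - 1}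

/-- the ε-repelling cost Ω_ε(i,j) = (e_i - e_j)ᵀ L_ε† (e_i - e_j) -/
noncomputable def cost (ε : ℝ) (i j : Fin n) : ℝ :=
  (Pi.single i 1 - Pi.single j 1) ⬝ᵥ (pinv (Γ.Leps ε)) *ᵥ (Pi.single i 1 - Pi.single j 1)

/-- the ε-repelling matrix Ω_ε -/
noncomputable def costMatrix (ε : ℝ) : Matrix (Fin n) (Fin n) ℝ :=
  Matrix.of fun i j => Γ.cost ε i j

/-- the node ε-repelling curvature, the unique solution of Ω_ε τ_ε = n·1 -/
noncomputable def tau (ε : ℝ) : Fin n → ℝ :=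
  (Γ.costMatrix ε)⁻¹ *ᵥ (fun _ => (n : ℝ))

/-- φ_ε = n · 1ᵀ Ω_ε⁻¹ 1 -/
noncomputable def phi (ε : ℝ) : ℝ :=
  (n : ℝ) * ((fun _ => (1 : ℝ)) ⬝ᵥ ((Γ.costMatrix ε)⁻¹ *ᵥ fun _ => (1 : ℝ)))

/-- the quantity Λ_ε(i,j) appearing in the edge ε-repelling curvature -/
noncomputable def Lam (ε : ℝ) (i j : Fin n) : ℝ :=
  (Γ.dminus i + Γ.dminus j)
    - (∑ k, Γ.cost ε j k * Γ.wminus i k + ∑ k, Γ.cost ε i k * Γ.wminus j k) / Γ.cost ε i j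

/-- the edge ε-repelling curvature ϑ_ε(i,j) -/
noncomputable def edgeCurv (ε : ℝ) (i j : Fin n) : ℝ :=
  2 * (Γ.tau ε i + Γ.tau ε j) / Γ.cost ε i j + (1 + ε) * Γ.Lam ε i j

end SignedGraph

/-!
For `ε < ε₀` the matrix `L_ε` dominates a positive semidefinite `L_ε'`, since `L₋ ⪰ 0`. So its
smallest eigenvalue is nonnegative and `(n - 1) λ₂ ≤ λ₂ + ⋯ + λₙ ≤ tr L_ε = ∑ dᵢ⁺ - ε ∑ dᵢ⁻`.
Negative connectivity gives every vertex a negative edge, so `dᵢ⁻ ≥ μ₋⁰` and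
`tr L_ε ≤ n d⁺_max - ε n μ₋⁰`. For `n ≥ 2` this is at most `(n - 1) (2 d⁺_max - ε μ₋⁰ / (D n))`,
as `n ≤ 2 (n - 1)` and `ε μ₋⁰ / (D n) ≤ ε μ₋⁰` (also when `D n = 0`, where the division gives
`0`). For `n ≤ 1` there is no second eigenvalue, `secondSmallestEig` returns `0`, and there is
no negative edge.
-/

lemma List.sub_one_mul_getD_one_le_sum {l : List ℝ} (hl : l.Pairwise (· ≤ ·))
    (h0 : ∀ x ∈ l, 0 ≤ x) : ((l.length : ℝ) - 1) * l.getD 1 0 ≤ l.sum := by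
  match l, hl with
  | [], _ => simp
  | [a], _ => simpa using h0 a (by simp)
  | a :: b :: t, hl =>
    have ha : 0 ≤ a := h0 a (by simp)
    have hbt : t.length • b ≤ t.sum :=
      List.card_nsmul_le_sum t b fun x hx => List.rel_of_pairwise_cons hl.of_cons hx
    simp only [List.length_cons, List.sum_cons, List.getD_cons_succ, List.getD_cons_zero,
      nsmul_eq_mul] at hbt ⊢
    push_cast
    linarith

section SortedEigs

variable {n : ℕ} {A : Matrix (Fin n) (Fin n) ℝ}

lemma sortedEigs_of_isHermitian (hA : A.IsHermitian) :
    sortedEigs A = (Finset.univ.val.map hA.eigenvalues).sort (· ≤ ·) :=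
  dif_pos hA

lemma length_sortedEigs_le : (sortedEigs A).length ≤ n := by
  unfold sortedEigs
  split_ifs <;> simp

lemma length_sortedEigs (hA : A.IsHermitian) : (sortedEigs A).length = n := by
  simp [sortedEigs_of_isHermitian hA]

lemma pairwise_sortedEigs : (sortedEigs A).Pairwise (· ≤ ·) := by
  unfold sortedEigs
  split_ifs
  · exact Multiset.pairwise_sort _ _
  · exact List.Pairwise.nil

lemma sum_sortedEigs (hA : A.IsHermitian) : (sortedEigs A).sum = A.trace := by
  rw [hA.trace_eq_sum_eigenvalues, ← Multiset.sum_coe, sortedEigs_of_isHermitian hA,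
    Multiset.sort_eq]
  simp [List.sum_ofFn]

lemma nonneg_of_mem_sortedEigs (hA : A.PosSemidef) {x : ℝ} (hx : x ∈ sortedEigs A) : 0 ≤ x := by
  rw [sortedEigs_of_isHermitian hA.isHermitian, Multiset.mem_sort] at hx
  obtain ⟨i, -, rfl⟩ := Multiset.mem_map.mp hx
  exact hA.eigenvalues_nonneg i

lemma secondSmallestEig_eq_zero_of_le_one (hn : n ≤ 1) : secondSmallestEig A = 0 :=
  List.getD_eq_default _ _ (length_sortedEigs_le.trans hn)

lemma sub_one_mul_secondSmallestEig_le_trace (hA : A.PosSemidef) :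
    ((n : ℝ) - 1) * secondSmallestEig A ≤ A.trace := by
  have h := List.sub_one_mul_getD_one_le_sum pairwise_sortedEigs
    fun _ => nonneg_of_mem_sortedEigs hA
  rwa [length_sortedEigs hA.isHermitian, sum_sortedEigs hA.isHermitian] at h

end SortedEigs

section WeightedLaplacian

variable {ι : Type*} [Fintype ι] [DecidableEq ι] {w : ι → ι → ℝ}

def weightedLaplacian (w : ι → ι → ℝ) : Matrix ι ι ℝ :=
  Matrix.of fun i j => if i = j then ∑ k, w i k else -w i j

lemma weightedLaplacian_mulVec (hdiag : ∀ i, w i i = 0) (x : ι → ℝ) :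
    weightedLaplacian w *ᵥ x = fun i => ∑ j, w i j * (x i - x j) := by
  have hL : weightedLaplacian w = diagonal (fun i => ∑ k, w i k) - Matrix.of w := by
    ext i j
    by_cases h : i = j
    · subst h; simp [weightedLaplacian, hdiag]
    · simp [weightedLaplacian, h]
  ext i
  rw [hL, sub_mulVec, Pi.sub_apply, mulVec_diagonal]
  simp [mulVec, dotProduct, mul_sub, Finset.sum_mul]

lemma dotProduct_weightedLaplacian_mulVec (hsymm : ∀ i j, w i j = w j i)
    (hdiag : ∀ i, w i i = 0) (x : ι → ℝ) :
    x ⬝ᵥ weightedLaplacian w *ᵥ x = (∑ i, ∑ j, w i j * (x i - x j) ^ 2) / 2 := by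
  have hswap : ∑ i, ∑ j, x i * (w i j * (x i - x j)) = ∑ i, ∑ j, x j * (w i j * (x j - x i)) := by
    rw [Finset.sum_comm]
    simp_rw [hsymm]
  rw [weightedLaplacian_mulVec hdiag, eq_div_iff two_ne_zero]
  simp only [dotProduct, Finset.mul_sum]
  rw [mul_two]
  nth_rewrite 2 [hswap]
  rw [← Finset.sum_add_distrib]
  refine Finset.sum_congr rfl fun i _ => ?_
  rw [← Finset.sum_add_distrib]
  exact Finset.sum_congr rfl fun j _ => by ring

lemma posSemidef_weightedLaplacian (hsymm : ∀ i j, w i j = w j i) (hnonneg : ∀ i j, 0 ≤ w i j)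
    (hdiag : ∀ i, w i i = 0) : (weightedLaplacian w).PosSemidef := by
  refine .of_dotProduct_mulVec_nonneg ?_ fun x => ?_
  · ext i j
    by_cases h : i = j
    · subst h; rfl
    · simp [weightedLaplacian, h, Ne.symm h, hsymm i j]
  · rw [star_trivial, dotProduct_weightedLaplacian_mulVec hsymm hdiag]
    exact div_nonneg (Finset.sum_nonneg fun i _ => Finset.sum_nonneg fun j _ =>
      mul_nonneg (hnonneg i j) (sq_nonneg _)) zero_le_two

end WeightedLaplacian

namespace SignedGraph

variable {n : ℕ} (Γ : SignedGraph n)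

lemma posSemidef_Lplus : Γ.Lplus.PosSemidef :=
  posSemidef_weightedLaplacian Γ.wplus_symm Γ.wplus_nonneg Γ.wplus_diag

lemma posSemidef_Lminus : Γ.Lminus.PosSemidef :=
  posSemidef_weightedLaplacian Γ.wminus_symm Γ.wminus_nonneg Γ.wminus_diag

lemma posSemidef_Leps_of_le {ε ε' : ℝ} (h : ε ≤ ε') (h' : (Γ.Leps ε').PosSemidef) :
    (Γ.Leps ε).PosSemidef := by
  have hL : Γ.Leps ε = Γ.Leps ε' + (ε' - ε) • Γ.Lminus := by
    simp only [Leps, sub_smul]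
    abel
  rw [hL]
  exact h'.add (Γ.posSemidef_Lminus.smul (sub_nonneg.mpr h))

lemma posSemidef_Leps_of_lt_consensusIndex {ε : ℝ} (hε : ε < Γ.consensusIndex) :
    (Γ.Leps ε).PosSemidef := by
  by_cases hS : {e : ℝ | 0 < e ∧ (Γ.Leps e).PosSemidef ∧ (Γ.Leps e).rank = n - 1}.Nonempty
  · obtain ⟨ε', ⟨-, hPSD, -⟩, hεε'⟩ := exists_lt_of_lt_csSup hS hε
    exact Γ.posSemidef_Leps_of_le hεε'.le hPSD
  · -- `sSup ∅ = 0`, so `ε < 0` and `L_ε` dominates `L_0 = L₊`.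
    rw [consensusIndex, Set.not_nonempty_iff_eq_empty.mp hS, Real.sSup_empty] at hε
    refine Γ.posSemidef_Leps_of_le hε.le ?_
    simpa [Leps] using Γ.posSemidef_Lplus

lemma trace_Leps (ε : ℝ) : (Γ.Leps ε).trace = ∑ i, Γ.dplus i - ε * ∑ i, Γ.dminus i := by
  simp [Leps, Lplus, Lminus, trace, Finset.mul_sum]

lemma iSup_dplus_nonneg : 0 ≤ ⨆ i, Γ.dplus i :=
  Real.iSup_nonneg fun i => Finset.sum_nonneg fun j _ => Γ.wplus_nonneg i j

noncomputable def minNegWeight : ℝ :=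
  sInf {c : ℝ | ∃ i j : Fin n, 0 < Γ.wminus i j ∧ c = Γ.wminus i j}

lemma minNegWeight_nonneg : 0 ≤ Γ.minNegWeight :=
  Real.sInf_nonneg fun _ ⟨_, _, hw, hc⟩ => hc ▸ hw.le

lemma minNegWeight_eq_zero_of_le_one (hn : n ≤ 1) : Γ.minNegWeight = 0 := by
  have : Subsingleton (Fin n) := Fin.subsingleton_iff_le_one.mpr hn
  rw [minNegWeight]
  convert Real.sInf_empty
  refine Set.eq_empty_of_forall_notMem fun c hc => ?_
  obtain ⟨i, j, hw, -⟩ := hc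
  rw [Subsingleton.elim i j, Γ.wminus_diag] at hw
  exact hw.false

lemma minNegWeight_le_dminus [Nontrivial (Fin n)] (hnc : Γ.NegConnected) (i : Fin n) :
    Γ.minNegWeight ≤ Γ.dminus i := by
  obtain ⟨j, hij⟩ := hnc.preconnected.exists_adj_of_nontrivial i
  have hw : 0 < Γ.wminus i j := by
    rcases hij.2 with h | h
    · exact h
    · rwa [Γ.wminus_symm]
  have hbdd : BddBelow {c : ℝ | ∃ i j : Fin n, 0 < Γ.wminus i j ∧ c = Γ.wminus i j} :=
    ⟨0, fun _ ⟨_, _, hw, hc⟩ => hc ▸ hw.le⟩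
  calc Γ.minNegWeight ≤ Γ.wminus i j := csInf_le hbdd ⟨i, j, hw, rfl⟩
    _ ≤ Γ.dminus i := Finset.single_le_sum (fun k _ => Γ.wminus_nonneg i k) (Finset.mem_univ j)

lemma trace_Leps_le [Nontrivial (Fin n)] (hnc : Γ.NegConnected) {ε : ℝ} (hε : 0 ≤ ε) :
    (Γ.Leps ε).trace ≤ n * (⨆ i, Γ.dplus i) - ε * (n * Γ.minNegWeight) := by
  have hplus : ∑ i, Γ.dplus i ≤ n * ⨆ i, Γ.dplus i := by
    simpa using Finset.sum_le_sum fun i (_ : i ∈ Finset.univ) =>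
      le_ciSup (Set.finite_range Γ.dplus).bddAbove i
  have hminus : n * Γ.minNegWeight ≤ ∑ i, Γ.dminus i := by
    simpa using Finset.sum_le_sum fun i (_ : i ∈ Finset.univ) => Γ.minNegWeight_le_dminus hnc i
  rw [Γ.trace_Leps]
  nlinarith

end SignedGraph

theorem stmt1_general {n : ℕ} (Γ : SignedGraph n) (hnc : Γ.NegConnected)
    (ε : ℝ) (hε0 : 0 < ε) (hε : ε < Γ.consensusIndex) :
    secondSmallestEig (Γ.Leps ε) ≤
      2 * (⨆ i : Fin n, Γ.dplus i)
        - ε * sInf {c : ℝ | ∃ i j : Fin n, 0 < Γ.wminus i j ∧ c = Γ.wminus i j}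
            / ((Γ.underlying.diam : ℝ) * (n : ℝ)) := by
  change _ ≤ 2 * _ - ε * Γ.minNegWeight / _
  set M := ⨆ i, Γ.dplus i
  set μ := Γ.minNegWeight
  have hM : 0 ≤ M := Γ.iSup_dplus_nonneg
  rcases le_or_gt n 1 with hn | hn
  · simpa [secondSmallestEig_eq_zero_of_le_one hn, μ, Γ.minNegWeight_eq_zero_of_le_one hn]
      using hM
  have : Nontrivial (Fin n) := Fin.nontrivial_iff_two_le.mpr hn
  set q := ε * μ / ((Γ.underlying.diam : ℝ) * n)
  have hεμ : 0 ≤ ε * μ := mul_nonneg hε0.le Γ.minNegWeight_nonneg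
  have hq : q ≤ ε * μ := by
    simpa only [q, Nat.cast_mul] using div_nat_le_self_of_nonnneg hεμ (Γ.underlying.diam * n)
  have hq0 : 0 ≤ q := by positivity
  have hn' : (2 : ℝ) ≤ n := by exact_mod_cast hn
  refine le_of_mul_le_mul_left (a := (n : ℝ) - 1) ?_ (by linarith)
  calc ((n : ℝ) - 1) * secondSmallestEig (Γ.Leps ε) ≤ (Γ.Leps ε).trace :=
        sub_one_mul_secondSmallestEig_le_trace (Γ.posSemidef_Leps_of_lt_consensusIndex hε)
    _ ≤ n * M - ε * (n * μ) := Γ.trace_Leps_le hnc hε0.le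
    _ ≤ ((n : ℝ) - 1) * (2 * M - q) := by nlinarith

/-- upper bound for λ₂ of the ε-repelling Laplacian on a signed
graph which is both positive- and negative-connected. -/
theorem stmt1 {n : ℕ} (Γ : SignedGraph n) (hpc : Γ.PosConnected) (hnc : Γ.NegConnected)
    (ε : ℝ) (hε0 : 0 < ε) (hε : ε < Γ.consensusIndex) :
    secondSmallestEig (Γ.Leps ε) ≤
      2 * (⨆ i : Fin n, Γ.dplus i)
        - ε * sInf {c : ℝ | ∃ i j : Fin n, 0 < Γ.wminus i j ∧ c = Γ.wminus i j}
            / ((Γ.underlying.diam : ℝ) * (n : ℝ)) :=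
  stmt1_general Γ hnc ε hε0 hε
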